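/- Let μ be a probability measure on a product space X = ∏_{v∈V} X^v (V finite), let 𝒦 be a partition of V into blocks, and let ℒ ⊆ 𝒦 be any subset of blocks. Let μ̂ = S^N μ be the empirical measure of N i.i.d. samples from μ, and for K ⊆ V let B^K ρ denote the marginal of ρ on ∏_{v∈K} X^v. Then ⫼⊗_{K∈ℒ} B^K μ − ⊗_{K∈ℒ} B^K μ̂⫼ ≤ 4·card(ℒ)/√N, where ⫼ρ − ρ'⫼ := sup_{|f|≤1} E[|ρ(f) − ρ'(f)|²]^{1/2}. -/

import Mathlib

/-!
The empirical side is the V-statistic `N⁻ᵈ ∑_{kk : Fin d → Fin N} F (X_{kk 1}, …, X_{kk d})` of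
`F x = f (x₁^{K₁}, …, x_d^{K_d})`, and the deterministic term is its mean `∫ F d(μ^⊗d)`. After centering
`F` to `G` (so `|G| ≤ 2`), the mean square error is `N⁻²ᵈ` times a sum of `E[G(X_kk) G(X_kk')]` over
pairs `(kk, kk')`, i.e. over maps `Fin d ⊕ Fin d → Fin N`. For an injective map the two factors
are independent and centered, so the term vanishes; the remaining at most
`C(2d, 2) N^(2d-1) ≤ 4d² N^(2d-1)` terms are bounded by `4`. Hence the error is at most `16d²/N`.
-/

open MeasureTheory ProbabilityTheory Finset

theorem Nat.mul_pow_le_mul_descFactorial_add_choose_two_mul_pow (n : ℕ) :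
    ∀ m : ℕ, n * n ^ m ≤ n * n.descFactorial m + m.choose 2 * n ^ m
  | 0 => by simp
  | m + 1 => by
    have ih := Nat.mul_pow_le_mul_descFactorial_add_choose_two_mul_pow n m
    have hstep : n * n.descFactorial m ≤ n.descFactorial (m + 1) + m * n.descFactorial m := by
      rw [Nat.descFactorial_succ, ← add_mul]
      exact Nat.mul_le_mul_right _ le_tsub_add
    have hchoose : (m + 1).choose 2 = m + m.choose 2 := by
      simp [Nat.choose_succ_succ']
    calc n * n ^ (m + 1) = n * (n * n ^ m) := by ring
      _ ≤ n * (n * n.descFactorial m + m.choose 2 * n ^ m) := Nat.mul_le_mul_left n ih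
      _ ≤ n * (n.descFactorial (m + 1) + m * n ^ m + m.choose 2 * n ^ m) := by
        gcongr
        exact hstep.trans (by gcongr; exact Nat.descFactorial_le_pow n m)
      _ = n * n.descFactorial (m + 1) + (m + 1).choose 2 * n ^ (m + 1) := by
        rw [hchoose]; ring

theorem Fintype.card_mul_card_not_injective_le (α β : Type*) [Fintype α] [DecidableEq α]
    [Fintype β] [DecidableEq β] :
    card β * #{h : α → β | ¬ Function.Injective h} ≤ (card α).choose 2 * card β ^ card α := by
  have hinj : #{h : α → β | Function.Injective h} = (card β).descFactorial (card α) := by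
    rw [← Fintype.card_subtype, Fintype.card_congr (Equiv.subtypeInjectiveEquivEmbedding α β),
      Fintype.card_embedding_eq]
  have hsplit := card_filter_add_card_filter_not (s := univ)
    (fun h : α → β => Function.Injective h)
  rw [card_univ, Fintype.card_fun, hinj] at hsplit
  have hpoly := Nat.mul_pow_le_mul_descFactorial_add_choose_two_mul_pow (card β) (card α)
  have hpow : card β * card β ^ card α = card β * (card β).descFactorial (card α)
      + card β * #{h : α → β | ¬ Function.Injective h} := by
    rw [← hsplit, mul_add]
  omega

theorem integral_pi_sum_mul {ι ι' : Type*} [Fintype ι] [Fintype ι'] {E : Type*}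
    [MeasurableSpace E] (μ : Measure E) [SigmaFinite μ]
    (G : (ι → E) → ℝ) (G' : (ι' → E) → ℝ) :
    ∫ y, G (fun i => y (Sum.inl i)) * G' (fun i => y (Sum.inr i)) ∂Measure.pi (fun _ => μ)
      = (∫ x, G x ∂Measure.pi (fun _ => μ)) * ∫ x, G' x ∂Measure.pi (fun _ => μ) := by
  rw [← integral_prod_mul,
    ← (measurePreserving_sumPiEquivProdPi_symm fun _ : ι ⊕ ι' => μ).integral_comp
      (MeasurableEquiv.measurableEmbedding _)]
  rfl

section IIDSample

variable {Ω E κ : Type*} [MeasurableSpace Ω] [MeasurableSpace E]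
  {P : Measure Ω} {μ : Measure E} {X : κ → Ω → E}

theorem map_comp_injective_eq_pi (hX : ∀ k, Measurable (X k)) (hindep : iIndepFun X P)
    (hlaw : ∀ k, P.map (X k) = μ) {ι : Type*} [Fintype ι] {j : ι → κ}
    (hj : Function.Injective j) :
    P.map (fun ω i => X (j i) ω) = Measure.pi fun _ => μ := by
  rw [(hindep.precomp hj).map_fun_eq_pi_map fun i => (hX (j i)).aemeasurable]
  simp only [hlaw]

theorem integral_comp_injective_eq_integral_pi (hX : ∀ k, Measurable (X k))
    (hindep : iIndepFun X P) (hlaw : ∀ k, P.map (X k) = μ) {ι : Type*} [Fintype ι] {j : ι → κ}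
    (hj : Function.Injective j) {H : (ι → E) → ℝ}
    (hH : AEStronglyMeasurable H (Measure.pi fun _ => μ)) :
    ∫ ω, H (fun i => X (j i) ω) ∂P = ∫ y, H y ∂Measure.pi fun _ => μ := by
  rw [← map_comp_injective_eq_pi hX hindep hlaw hj] at hH ⊢
  exact (integral_map (measurable_pi_lambda _ fun i => hX (j i)).aemeasurable hH).symm

theorem integral_sq_sum_comp_le [IsProbabilityMeasure P] [IsProbabilityMeasure μ]
    [Fintype κ] [DecidableEq κ] (hX : ∀ k, Measurable (X k)) (hindep : iIndepFun X P)
    (hlaw : ∀ k, P.map (X k) = μ) {ι : Type*} [Fintype ι] [DecidableEq ι]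
    {G : (ι → E) → ℝ} (hG : Measurable G) {C : ℝ} (hGC : ∀ x, |G x| ≤ C)
    (hG0 : ∫ x, G x ∂Measure.pi (fun _ => μ) = 0) :
    ∫ ω, (∑ kk : ι → κ, G (fun i => X (kk i) ω)) ^ 2 ∂P
      ≤ #{h : ι ⊕ ι → κ | ¬ Function.Injective h} * C ^ 2 := by
  set H : (ι ⊕ ι → E) → ℝ := fun y => G (fun i => y (Sum.inl i)) * G (fun i => y (Sum.inr i))
  have hH : Measurable H := by unfold H; fun_prop
  have hHC : ∀ y, ‖H y‖ ≤ C ^ 2 := fun y => by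
    rw [Real.norm_eq_abs, abs_mul, sq]
    exact mul_le_mul (hGC _) (hGC _) (abs_nonneg _)
      ((abs_nonneg _).trans (hGC fun i => y (.inl i)))
  have hexpand : ∀ ω, (∑ kk : ι → κ, G (fun i => X (kk i) ω)) ^ 2
      = ∑ h : ι ⊕ ι → κ, H (fun i => X (h i) ω) := fun ω => by
    rw [sq, sum_mul_sum, ← Fintype.sum_prod_type',
      ← (Equiv.sumArrowEquivProdArrow ι ι κ).symm.sum_comp]
    rfl
  have hterm : ∀ h : ι ⊕ ι → κ,
      ∫ ω, H (fun i => X (h i) ω) ∂P ≤ if Function.Injective h then 0 else C ^ 2 := fun h => by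
    split_ifs with hinj
    · rw [integral_comp_injective_eq_integral_pi hX hindep hlaw hinj hH.aestronglyMeasurable,
        integral_pi_sum_mul, hG0, mul_zero]
    · refine (le_abs_self _).trans ?_
      simpa using norm_integral_le_of_norm_le_const (μ := P)
        (.of_forall fun ω => hHC fun i => X (h i) ω)
  have hint : ∀ h : ι ⊕ ι → κ, Integrable (fun ω => H (fun i => X (h i) ω)) P := fun h =>
    Integrable.of_bound (hH.comp (measurable_pi_lambda _ fun i => hX (h i))).aestronglyMeasurable
      (C ^ 2) (.of_forall fun ω => hHC fun i => X (h i) ω)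
  calc ∫ ω, (∑ kk : ι → κ, G (fun i => X (kk i) ω)) ^ 2 ∂P
      = ∑ h : ι ⊕ ι → κ, ∫ ω, H (fun i => X (h i) ω) ∂P := by
        simp only [hexpand]
        exact integral_finsetSum _ fun h _ => hint h
    _ ≤ ∑ h : ι ⊕ ι → κ, if Function.Injective h then 0 else C ^ 2 :=
        sum_le_sum fun h _ => hterm h
    _ = #{h : ι ⊕ ι → κ | ¬ Function.Injective h} * C ^ 2 := by
        rw [sum_ite, sum_const_zero, zero_add, sum_const, nsmul_eq_mul]

theorem integral_sq_sub_vStatistic_le [IsProbabilityMeasure P] [IsProbabilityMeasure μ]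
    [Fintype κ] [Nonempty κ] (hX : ∀ k, Measurable (X k))
    (hindep : iIndepFun X P) (hlaw : ∀ k, P.map (X k) = μ) {ι : Type*} [Fintype ι]
    [DecidableEq ι] {F : (ι → E) → ℝ} (hF : Measurable F) (hF1 : ∀ x, |F x| ≤ 1) :
    ∫ ω, (∫ x, F x ∂Measure.pi (fun _ => μ)
        - (Fintype.card κ : ℝ)⁻¹ ^ Fintype.card ι * ∑ kk : ι → κ, F (fun i => X (kk i) ω)) ^ 2 ∂P
      ≤ 16 * (Fintype.card ι : ℝ) ^ 2 / Fintype.card κ := by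
  classical
  set I := ∫ x, F x ∂Measure.pi (fun _ => μ)
  set c : ℝ := (Fintype.card κ : ℝ)⁻¹ ^ Fintype.card ι
  have hI : |I| ≤ 1 := by
    simpa using norm_integral_le_of_norm_le_const (μ := Measure.pi fun _ : ι => μ)
      (.of_forall fun x => (Real.norm_eq_abs (F x)).trans_le (hF1 x))
  have hG0 : ∫ x, (F x - I) ∂Measure.pi (fun _ => μ) = 0 := by
    rw [integral_sub (Integrable.of_bound hF.aestronglyMeasurable 1 (.of_forall hF1))
      (integrable_const I), integral_const]
    simp [I]
  have hcenter : ∀ ω, I - c * ∑ kk : ι → κ, F (fun i => X (kk i) ω)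
      = -(c * ∑ kk : ι → κ, (F (fun i => X (kk i) ω) - I)) := fun ω => by
    have hcI : c * ∑ _kk : ι → κ, I = I := by
      rw [sum_const, card_univ, Fintype.card_fun, nsmul_eq_mul, ← mul_assoc, Nat.cast_pow,
        ← mul_pow, inv_mul_cancel₀ (by positivity), one_pow, one_mul]
    rw [sum_sub_distrib, mul_sub, hcI]
    ring
  have hsum := integral_sq_sum_comp_le hX hindep hlaw (G := fun x => F x - I)
    (hF.sub measurable_const)
    (fun x => (abs_sub (F x) I).trans (add_le_add (hF1 x) hI)) hG0
  have hbad : (Fintype.card κ : ℝ) * #{h : ι ⊕ ι → κ | ¬ Function.Injective h}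
      ≤ 4 * Fintype.card ι ^ 2 * Fintype.card κ ^ (Fintype.card ι + Fintype.card ι) := by
    have := (Fintype.card_mul_card_not_injective_le (ι ⊕ ι) κ).trans
      (Nat.mul_le_mul_right _ (Nat.choose_le_pow _ 2))
    rw [Fintype.card_sum] at this
    exact_mod_cast this.trans_eq (by ring)
  simp_rw [hcenter, neg_sq, mul_pow]
  rw [integral_const_mul]
  calc c ^ 2 * ∫ ω, (∑ kk : ι → κ, (F (fun i => X (kk i) ω) - I)) ^ 2 ∂P
      ≤ c ^ 2 * (#{h : ι ⊕ ι → κ | ¬ Function.Injective h} * (1 + 1) ^ 2) := by gcongr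
    _ ≤ 16 * (Fintype.card ι : ℝ) ^ 2 / Fintype.card κ := by
      simp only [c]
      rw [← pow_mul, mul_two, inv_pow, inv_mul_le_iff₀ (by positivity),
        mul_div_assoc', le_div_iff₀ (by positivity)]
      linarith

end IIDSample

theorem block_marginal_sampling_bound_general {V : Type*}
    (Xsp : V → Type*) [∀ v, MeasurableSpace (Xsp v)]
    {Ω : Type*} [MeasurableSpace Ω] (P : Measure Ω) [IsProbabilityMeasure P]
    (μ : Measure (∀ v, Xsp v)) [IsProbabilityMeasure μ]
    (N : ℕ) (hN : 0 < N)
    (Xs : Fin N → Ω → ∀ v, Xsp v) (hmeas : ∀ k, Measurable (Xs k))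
    (hindep : iIndepFun Xs P)
    (hlaw : ∀ k, P.map (Xs k) = μ)
    (d : ℕ) (K : Fin d → Finset V)
    (f : (∀ k : Fin d, ∀ v : {v // v ∈ K k}, Xsp v.1) → ℝ)
    (hf : Measurable f) (hfb : ∀ x, |f x| ≤ 1) :
    Real.sqrt (∫ ω,
        |(∫ xs, f (fun k v => xs k v.1) ∂(Measure.pi fun _ : Fin d => μ)) -
          (N : ℝ)⁻¹ ^ d *
            ∑ kk : Fin d → Fin N, f (fun k v => Xs (kk k) ω v.1)| ^ 2 ∂P)
      ≤ 4 * d / Real.sqrt N := by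
  have : Nonempty (Fin N) := ⟨⟨0, hN⟩⟩
  have hmse := integral_sq_sub_vStatistic_le hmeas hindep hlaw
    (F := fun xs : Fin d → ∀ v, Xsp v => f (fun k v => xs k v.1)) (hf.comp (by fun_prop))
    (fun _ => hfb _)
  simp only [Fintype.card_fin] at hmse
  simp_rw [sq_abs]
  calc _ ≤ Real.sqrt (16 * (d : ℝ) ^ 2 / N) := Real.sqrt_le_sqrt hmse
    _ = 4 * d / Real.sqrt N := by
      rw [Real.sqrt_div' _ (Nat.cast_nonneg N), show 16 * (d : ℝ) ^ 2 = (4 * d) ^ 2 by ring,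
        Real.sqrt_sq (by positivity)]

/-- Sampling error of products of block marginals: for disjoint blocks
`K_1,…,K_d ⊆ V` and the empirical measure `μ̂ = S^N μ` of `N` i.i.d. samples from
`μ`, one has `⫼⊗_k B^{K_k} μ − ⊗_k B^{K_k} μ̂⫼ ≤ 4d/√N`, where
`(⊗_k B^{K_k} ρ)(f) = ∫⋯∫ f(x_1^{K_1},…,x_d^{K_d}) ρ(dx_1)⋯ρ(dx_d)`. -/
theorem block_marginal_sampling_bound {V : Type*} [Fintype V]
    (Xsp : V → Type*) [∀ v, MeasurableSpace (Xsp v)]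
    {Ω : Type*} [MeasurableSpace Ω] (P : Measure Ω) [IsProbabilityMeasure P]
    (μ : Measure (∀ v, Xsp v)) [IsProbabilityMeasure μ]
    (N : ℕ) (hN : 0 < N)
    (Xs : Fin N → Ω → ∀ v, Xsp v) (hmeas : ∀ k, Measurable (Xs k))
    (hindep : iIndepFun Xs P)
    (hlaw : ∀ k, P.map (Xs k) = μ)
    (d : ℕ) (K : Fin d → Finset V)
    (hdisj : ∀ k k', k ≠ k' → Disjoint (K k) (K k'))
    (f : (∀ k : Fin d, ∀ v : {v // v ∈ K k}, Xsp v.1) → ℝ)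
    (hf : Measurable f) (hfb : ∀ x, |f x| ≤ 1) :
    Real.sqrt (∫ ω,
        |(∫ xs, f (fun k v => xs k v.1) ∂(Measure.pi fun _ : Fin d => μ)) -
          (N : ℝ)⁻¹ ^ d *
            ∑ kk : Fin d → Fin N, f (fun k v => Xs (kk k) ω v.1)| ^ 2 ∂P)
      ≤ 4 * d / Real.sqrt N :=
  block_marginal_sampling_bound_general Xsp P μ N hN Xs hmeas hindep hlaw d K f hf hfb
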